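/- Borel-Cantelli consequence: almost-sure gentle disintegration. Suppose the strictly increasing sequences Gamma, gamma satisfy: Gamma_1 >= 2 and Gamma_k < gamma_k/2 for all k >= 1; inf over k >= 1 of Gamma_{k+1}/theta_k >= 5; a_0 := sum over k >= 0 of 2^{-k} log( [2(Gamma_{k+1}+gamma_{k+1})+1]^2 ) < infinity; and for every a > 0, sum over k >= 1 of [2(theta_k+Gamma_k)+1]^2 e^{-a 2^{k-1}} < infinity. Let Q be a translation-invariant probability measure on Omega with p := ess sup_omega Q(omega_0 = 1 | sigma-algebra generated by (omega_j)_{j different from 0})(omega) < e^{-a_0/2}. Then there exists a measurable set Omegabar subset of Omega with Q(Omegabar) = 1 such that for every omega in Omegabar, the collection consisting of C_0(omega) := {{i} : omega_i = 0} together with the collections C_k(omega) of k-gentle atoms, k >= 1, is a gentle disintegration of L^(l) with respect to {i : omega_i = 0}, Gamma, gamma. -/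

import Mathlib

open MeasureTheory Real

/-! Multi-scale geometry of the bad region.

The rescaled lattice `L^(l) = (lℤ)²` is identified with `ℤ²` via the bijection
`i ↦ l·i`; under this identification the rescaled distance `d_l` on `L^(l)` becomes the
ℓ¹ distance on `ℤ²`.  Accordingly, sites of `L^(l)` are represented by points of `ℤ²`
and all distances below are measured in units of `l`. -/

/-- Sites of the (rescaled) lattice. -/
abbrev Site : Type := ℤ × ℤ

/-- The ℓ¹ distance on the (rescaled) lattice, i.e. `d_l` in units of `l`. -/
def dist1 (x y : Site) : ℕ := (x.1 - y.1).natAbs + (x.2 - y.2).natAbs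

/-- The space `Ω = {0,1}^{L^(l)}`; `true` encodes `1` (bad), `false` encodes `0` (good). -/
abbrev Omega : Type := Site → Bool

/-- The closed ball `B^(l)_r(x)` of (real) radius `r` around `x`. -/
def ball1 (r : ℝ) (x : Site) : Set Site := {j | (dist1 x j : ℝ) ≤ r}

/-- `θ_k := ∑_{h=1}^k (Γ_h + γ_h)`. -/
noncomputable def thetaSeq (Γ γ : ℕ → ℝ) (k : ℕ) : ℝ := ∑ h ∈ Finset.Icc 1 k, (Γ h + γ h)

/-- `g` is a `k`-gentle atom for the bad set `B`: `g = B^(l)_{Γ_k}(x) ∩ B` for some `x ∈ B`,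
`diam_l(g) ≤ Γ_k`, and `d_l(g, B \ g) > γ_k`. -/
def kAtom (Γ γ : ℕ → ℝ) (k : ℕ) (B : Set Site) (g : Set Site) : Prop :=
  (∃ x ∈ B, g = ball1 (Γ k) x ∩ B) ∧
    (∀ x ∈ g, ∀ y ∈ g, (dist1 x y : ℝ) ≤ Γ k) ∧
    ∀ x ∈ g, ∀ y ∈ B \ g, γ k < (dist1 x y : ℝ)

/-- The union of all `k`-gentle atoms of the bad set `B`. -/
def gentleStep (Γ γ : ℕ → ℝ) (k : ℕ) (B : Set Site) : Set Site :=
  {y | ∃ g : Set Site, kAtom Γ γ k B g ∧ y ∈ g}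

/-- The `k`-bad sites `BB_k(ω)`:  `BB_0(ω) = {i : ω_i = 1}` and
`BB_k(ω) = BB_{k-1}(ω) \ GG_k(ω)`. -/
def BB (Γ γ : ℕ → ℝ) (ω : Omega) : ℕ → Set Site
  | 0 => {i | ω i = true}
  | k + 1 => BB Γ γ ω k \ gentleStep Γ γ (k + 1) (BB Γ γ ω k)

/-- The `k`-gentle sites `GG_k(ω)`:  `GG_0(ω) = {i : ω_i = 0}` and, for `k ≥ 1`,
`GG_k(ω)` is the union of the `k`-gentle atoms of `BB_{k-1}(ω)`. -/
def GG (Γ γ : ℕ → ℝ) (ω : Omega) : ℕ → Set Site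
  | 0 => {i | ω i = false}
  | k + 1 => gentleStep Γ γ (k + 1) (BB Γ γ ω k)

/-- The σ-algebra generated by the coordinates `ω_j` with `j ≠ 0`. -/
def extSigma : MeasurableSpace Omega :=
  MeasurableSpace.comap (fun (ω : Omega) (j : {j : Site // j ≠ 0}) => ω j) inferInstance

/-- A version of the conditional probability `Q(ω_0 = 1 | σ(ω_j, j ≠ 0))`. -/
noncomputable def condBadProb (Q : Measure Omega) : Omega → ℝ :=
  Q[Set.indicator {ω : Omega | ω 0 = true} (fun _ => (1 : ℝ)) | extSigma]

/-- The strength of the disorder: `p = ess sup_ω Q(ω_0 = 1 | σ(ω_j, j ≠ 0))(ω)`. -/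
noncomputable def badParam (Q : Measure Omega) : ℝ := essSup (condBadProb Q) Q

/-- Invariance of `Q` under all lattice translations of `L^(l)`. -/
def TransInvariant (Q : Measure Omega) : Prop :=
  ∀ v : Site, Measure.map (fun (ω : Omega) (x : Site) => ω (x + v)) Q = Q

/-- `a₀ := ∑_{k≥0} 2^{-k} log([2(Γ_{k+1}+γ_{k+1})+1]²)`. -/
noncomputable def aZero (Γ γ : ℕ → ℝ) : ℝ :=
  ∑' k : ℕ, (2 : ℝ) ^ (-(k : ℤ)) * Real.log ((2 * (Γ (k + 1) + γ (k + 1)) + 1) ^ 2)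

/-- The coordinate envelope of `g`: the smallest coordinate rectangle containing `g`. -/
def env (g : Set Site) : Set Site :=
  {j | (∃ a ∈ g, a.1 ≤ j.1) ∧ (∃ a ∈ g, j.1 ≤ a.1) ∧ (∃ a ∈ g, a.2 ≤ j.2) ∧ (∃ a ∈ g, j.2 ≤ a.2)}

/-- `Y₀(g)` for a grade-`k` atom `g`: the set of sites within Chebyshev distance `θ_k`
of the envelope of `g` (coordinates measured in units of `l`). -/
def Yzero (Γ γ : ℕ → ℝ) (k : ℕ) (g : Set Site) : Set Site :=
  {j | ∃ i' ∈ env g, (max (i'.1 - j.1).natAbs (i'.2 - j.2).natAbs : ℝ) ≤ thetaSeq Γ γ k}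

/-- `GG_k` associated with a graded family `C`: the union of the elements of `C k`. -/
def GGofC (C : ℕ → Set (Set Site)) (k : ℕ) : Set Site := ⋃ g ∈ C k, g

/-- `BB_k` associated with a graded family `C`: `BB_0 = (GG_0)ᶜ`, `BB_k = BB_{k-1} \ GG_k`. -/
def BBofC (C : ℕ → Set (Set Site)) : ℕ → Set Site
  | 0 => (GGofC C 0)ᶜ
  | k + 1 => BBofC C k \ GGofC C (k + 1)

/-- A gentle disintegration of `L^(l)` with respect to `G₀`, `Γ`, `γ`: a sequence
`(C_k)_{k≥0}` of collections of finite subsets of `L^(l)` such that the union of the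
`C_k` is a partition of `L^(l)` (with uniquely determined grades); `C_0 = {{i} : i ∈ G₀}`;
every `g ∈ C_k`, `k ≥ 1`, has `diam_l(g) ≤ Γ_k` and `d_l(g, BB_{k-1} \ g) > γ_k`; and
for every site `i` the grades `k ≥ 1` of atoms `g ∈ C_k` with `Y₀(g) ∋ i` are bounded. -/
def IsGentleDisintegration (Γ γ : ℕ → ℝ) (G0 : Set Site) (C : ℕ → Set (Set Site)) : Prop :=
  (∀ k : ℕ, ∀ g ∈ C k, g.Finite) ∧
    (∀ k : ℕ, ∀ g ∈ C k, g.Nonempty) ∧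
    (∀ k k' : ℕ, ∀ g : Set Site, g ∈ C k → g ∈ C k' → k = k') ∧
    (∀ k k' : ℕ, ∀ g g' : Set Site, g ∈ C k → g' ∈ C k' → g ≠ g' → Disjoint g g') ∧
    (⋃ k : ℕ, GGofC C k) = Set.univ ∧
    C 0 = {s | ∃ i ∈ G0, s = {i}} ∧
    (∀ k : ℕ, ∀ g ∈ C (k + 1), ∀ x ∈ g, ∀ y ∈ g, (dist1 x y : ℝ) ≤ Γ (k + 1)) ∧
    (∀ k : ℕ, ∀ g ∈ C (k + 1), ∀ x ∈ g, ∀ y ∈ BBofC C k \ g, γ (k + 1) < (dist1 x y : ℝ)) ∧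
    ∀ i : Site, ∃ K : ℕ, ∀ k : ℕ, ∀ g ∈ C (k + 1), i ∈ Yzero Γ γ (k + 1) g → k + 1 ≤ K

/-- The graded family constructed from the disorder `ω`: `C_0(ω)` consists of the
singletons of the `0`-gentle sites, and `C_k(ω)`, `k ≥ 1`, of the `k`-gentle atoms. -/
def Catoms (Γ γ : ℕ → ℝ) (ω : Omega) : ℕ → Set (Set Site)
  | 0 => {s | ∃ i : Site, ω i = false ∧ s = {i}}
  | k + 1 => {g | kAtom Γ γ (k + 1) (BB Γ γ ω k) g}

/-!
A site `i` that is still bad at level `k` has a companion at ℓ¹-distance in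
`(Γ_k / 2, Γ_k + γ_k]` that is bad at level `k - 1`, for otherwise `B_{Γ_k}(i) ∩ BB_{k-1}` would
be a `k`-gentle atom. Iterating, `i` is the root of a binary tree of `2^k` sites with `ω = 1`,
distinct because `Γ_{k+1} ≥ 4 θ_k`, and there are at most `exp (2^k a₀ / 2)` such trees.
Translation invariance and conditioning on all other sites show that `n` given sites are all bad
with probability at most `p^n`, hence `Q(i ∈ BB_k) ≤ (p e^{a₀/2})^{2^k}`. Summing over the box in
which a `(k+1)`-atom `g` with `i ∈ Y₀(g)` has to lie and applying Borel–Cantelli, almost surely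
every site eventually has no bad site nearby. This gives the covering and the local finiteness of
the grades; the other axioms of a gentle disintegration hold for every `ω` by construction.
-/

lemma ae_eventually_notMem_of_measureReal_le {α : Type*} [MeasurableSpace α] {μ : Measure α}
    [IsFiniteMeasure μ] {s : ℕ → Set α} {b : ℕ → ℝ} (hb : Summable b)
    (hs : ∀ n, μ.real (s n) ≤ b n) : ∀ᵐ x ∂μ, ∀ᶠ n in Filter.atTop, x ∉ s n := by
  refine ae_eventually_notMem (ne_top_of_le_ne_top (ENNReal.ofReal_ne_top (r := ∑' n, b n)) ?_)
  rw [ENNReal.ofReal_tsum_of_nonneg (fun n => measureReal_nonneg.trans (hs n)) hb]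
  exact ENNReal.tsum_le_tsum fun n => (ofReal_measureReal).symm.le.trans
    (ENNReal.ofReal_le_ofReal (hs n))

lemma exists_measurableSet_measure_eq_one {α : Type*} [MeasurableSpace α] {μ : Measure α}
    [IsProbabilityMeasure μ] {P : α → Prop} (h : ∀ᵐ x ∂μ, P x) :
    ∃ s, MeasurableSet s ∧ μ s = 1 ∧ ∀ x ∈ s, P x := by
  refine ⟨(toMeasurable μ {x | ¬ P x})ᶜ, (measurableSet_toMeasurable _ _).compl, ?_,
    fun x hx => by_contra fun hPx => hx (subset_toMeasurable _ _ hPx)⟩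
  rw [prob_compl_eq_one_iff (measurableSet_toMeasurable _ _), measure_toMeasurable]
  exact ae_iff.1 h

/-- `r ≤ (1 + r) / 2 =: e^{-a}`. -/
lemma exists_pos_pow_le_exp {r : ℝ} (h0 : 0 ≤ r) (h1 : r < 1) :
    ∃ a, 0 < a ∧ ∀ n : ℕ, r ^ n ≤ Real.exp (-a * n) := by
  refine ⟨-Real.log ((1 + r) / 2), neg_pos.2 (Real.log_neg (by positivity) (by linarith)),
    fun n => ?_⟩
  rw [neg_neg, mul_comm, Real.exp_nat_mul, Real.exp_log (by positivity)]
  exact pow_le_pow_left₀ h0 (by linarith) n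

def cheb (x y : Site) : ℕ := max (x.1 - y.1).natAbs (x.2 - y.2).natAbs

lemma dist1_self (x : Site) : dist1 x x = 0 := by simp [dist1]

lemma dist1_comm (x y : Site) : dist1 x y = dist1 y x := by unfold dist1; omega

lemma dist1_triangle (x y z : Site) : (dist1 x z : ℝ) ≤ dist1 x y + dist1 y z := by
  norm_cast; unfold dist1; omega

lemma cheb_self (x : Site) : cheb x x = 0 := by simp [cheb]

lemma cheb_comm (x y : Site) : cheb x y = cheb y x := by unfold cheb; omega

lemma cheb_triangle (x y z : Site) : cheb x z ≤ cheb x y + cheb y z := by unfold cheb; omega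

lemma cheb_le_dist1 (x y : Site) : cheb x y ≤ dist1 x y := by unfold cheb dist1; omega

lemma cheb_le_of_mem_env {g : Set Site} {D : ℝ} (hD : ∀ x ∈ g, ∀ y ∈ g, (dist1 x y : ℝ) ≤ D)
    {j a : Site} (hj : j ∈ env g) (ha : a ∈ g) : (cheb j a : ℝ) ≤ D := by
  obtain ⟨⟨b₁, hb₁, h₁⟩, ⟨c₁, hc₁, h₁'⟩, ⟨b₂, hb₂, h₂⟩, ⟨c₂, hc₂, h₂'⟩⟩ := hj
  have hmax : cheb j a ≤ max (max (dist1 b₁ a) (dist1 c₁ a)) (max (dist1 b₂ a) (dist1 c₂ a)) := by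
    refine max_le_max ?_ ?_ <;> unfold dist1 <;> omega
  refine (Nat.cast_le.2 hmax).trans ?_
  push_cast
  exact max_le (max_le (hD _ hb₁ _ ha) (hD _ hc₁ _ ha)) (max_le (hD _ hb₂ _ ha) (hD _ hc₂ _ ha))

noncomputable def chebBall (i : Site) (n : ℕ) : Finset Site :=
  Finset.Icc (i.1 - n, i.2 - n) (i.1 + n, i.2 + n)

lemma mem_chebBall {i j : Site} {n : ℕ} : j ∈ chebBall i n ↔ cheb i j ≤ n := by
  simp only [chebBall, Finset.mem_Icc, Prod.le_def, cheb]; omega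

lemma card_chebBall (i : Site) (n : ℕ) : (chebBall i n).card = (2 * n + 1) ^ 2 := by
  rw [chebBall, Finset.card_Icc_prod, Int.card_Icc, Int.card_Icc, sq]
  congr 1 <;> omega

lemma card_chebBall_floor_le (i : Site) {R : ℝ} (hR : 0 ≤ R) :
    ((chebBall i ⌊R⌋₊).card : ℝ) ≤ (2 * R + 1) ^ 2 := by
  rw [card_chebBall]
  push_cast
  gcongr
  exact Nat.floor_le hR

lemma mem_chebBall_floor_of_dist1_le {i j : Site} {R : ℝ} (h : (dist1 i j : ℝ) ≤ R) :
    j ∈ chebBall i ⌊R⌋₊ :=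
  mem_chebBall.2 (Nat.le_floor ((Nat.cast_le.2 (cheb_le_dist1 i j)).trans h))

lemma finite_ball1 (R : ℝ) (x : Site) : (ball1 R x).Finite :=
  (chebBall x ⌊R⌋₊).finite_toSet.subset fun _ hj => mem_chebBall_floor_of_dist1_le hj

lemma thetaSeq_succ (Γ γ : ℕ → ℝ) (k : ℕ) :
    thetaSeq Γ γ (k + 1) = thetaSeq Γ γ k + (Γ (k + 1) + γ (k + 1)) := by
  rw [thetaSeq, thetaSeq, Finset.sum_Icc_succ_top (by omega)]

lemma thetaSeq_nonneg {Γ γ : ℕ → ℝ} (hΓpos : ∀ k, 1 ≤ k → 0 < Γ k)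
    (hγpos : ∀ k, 1 ≤ k → 0 < γ k) (k : ℕ) : 0 ≤ thetaSeq Γ γ k :=
  Finset.sum_nonneg fun h hh =>
    add_nonneg (hΓpos h (Finset.mem_Icc.1 hh).1).le (hγpos h (Finset.mem_Icc.1 hh).1).le

lemma four_mul_thetaSeq_le {Γ γ : ℕ → ℝ} (hΓpos : ∀ k, 1 ≤ k → 0 < Γ k)
    (hγpos : ∀ k, 1 ≤ k → 0 < γ k) (hsteep : ∀ k, 1 ≤ k → 5 ≤ Γ (k + 1) / thetaSeq Γ γ k)
    (k : ℕ) : 4 * thetaSeq Γ γ k ≤ Γ (k + 1) := by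
  rcases (thetaSeq_nonneg hΓpos hγpos k).eq_or_lt with h0 | hθ
  · rw [← h0]
    linarith [hΓpos (k + 1) (by omega)]
  · have hk : 1 ≤ k := by
      rcases k with _ | k
      · simp [thetaSeq] at hθ
      · omega
    linarith [(le_div_iff₀ hθ).1 (hsteep k hk)]

section Atoms

variable {Γ γ : ℕ → ℝ} {k : ℕ} {B g g' : Set Site}

lemma kAtom.subset (h : kAtom Γ γ k B g) : g ⊆ B := by
  obtain ⟨⟨x, -, rfl⟩, -, -⟩ := h
  exact Set.inter_subset_right

lemma kAtom.nonempty (hΓ : 0 ≤ Γ k) (h : kAtom Γ γ k B g) : g.Nonempty := by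
  obtain ⟨⟨x, hx, rfl⟩, -, -⟩ := h
  exact ⟨x, by simpa [ball1, dist1_self] using hΓ, hx⟩

lemma kAtom.finite (h : kAtom Γ γ k B g) : g.Finite := by
  obtain ⟨⟨x, -, rfl⟩, -, -⟩ := h
  exact (finite_ball1 _ x).subset Set.inter_subset_left

lemma kAtom.subset_of_mem (hΓγ : Γ k < γ k) (h : kAtom Γ γ k B g) (h' : kAtom Γ γ k B g')
    {z : Site} (hz : z ∈ g) (hz' : z ∈ g') : g ⊆ g' := by
  intro y hy
  by_contra hy'
  have hnear : (dist1 y z : ℝ) ≤ Γ k := h.2.1 y hy z hz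
  have hfar : γ k < dist1 z y := h'.2.2 z hz' y ⟨h.subset hy, hy'⟩
  rw [dist1_comm] at hfar
  linarith

lemma kAtom.disjoint (hΓγ : Γ k < γ k) (h : kAtom Γ γ k B g) (h' : kAtom Γ γ k B g')
    (hne : g ≠ g') : Disjoint g g' :=
  Set.disjoint_left.2 fun _ hz hz' =>
    hne ((h.subset_of_mem hΓγ h' hz hz').antisymm (h'.subset_of_mem hΓγ h hz' hz))

/-- If `i` is not gentle, the ball `B_{Γ_k}(i) ∩ B` fails to be an atom: either it is too wide,
and one of the two far-apart points is farther than `Γ_k / 2` from `i`, or some site of `B`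
outside it lies within `γ_k` of it. -/
lemma exists_mem_far_of_notMem_gentleStep (hΓ : 0 ≤ Γ k) (hγ : 0 ≤ γ k) {i : Site}
    (hi : i ∈ B) (hni : i ∉ gentleStep Γ γ k B) :
    ∃ j ∈ B, Γ k / 2 < dist1 i j ∧ (dist1 i j : ℝ) ≤ Γ k + γ k := by
  have hig : i ∈ ball1 (Γ k) i ∩ B := ⟨by simpa [ball1, dist1_self] using hΓ, hi⟩
  have hnot : ¬ ((∀ x ∈ ball1 (Γ k) i ∩ B, ∀ y ∈ ball1 (Γ k) i ∩ B, (dist1 x y : ℝ) ≤ Γ k) ∧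
      ∀ x ∈ ball1 (Γ k) i ∩ B, ∀ y ∈ B \ (ball1 (Γ k) i ∩ B), γ k < dist1 x y) :=
    fun hatom => hni ⟨_, ⟨⟨i, hi, rfl⟩, hatom⟩, hig⟩
  simp only [not_and_or, not_forall, not_lt, not_le, exists_prop] at hnot
  rcases hnot with ⟨y, ⟨hy, hyB⟩, z, ⟨hz, hzB⟩, hyz⟩ | ⟨y, ⟨hy, -⟩, z, ⟨hzB, hz⟩, hyz⟩
  · have htri := dist1_triangle y i z
    rw [dist1_comm y i] at htri
    simp only [ball1, Set.mem_ofPred_eq] at hy hz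
    rcases le_total (dist1 i y : ℝ) (dist1 i z) with h | h
    · exact ⟨z, hzB, by linarith, by linarith⟩
    · exact ⟨y, hyB, by linarith, by linarith⟩
  · have hzfar : Γ k < dist1 i z := not_le.1 fun h => hz ⟨h, hzB⟩
    simp only [ball1, Set.mem_ofPred_eq] at hy
    exact ⟨z, hzB, by linarith, by linarith [dist1_triangle i y z]⟩

end Atoms

section GradedFamily

variable {C : ℕ → Set (Set Site)}

lemma mem_GGofC {k : ℕ} {g : Set Site} {x : Site} (hg : g ∈ C k) (hx : x ∈ g) :
    x ∈ GGofC C k :=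
  Set.mem_biUnion hg hx

lemma mem_BBofC_iff {i : Site} {k : ℕ} : i ∈ BBofC C k ↔ ∀ j ≤ k, i ∉ GGofC C j := by
  induction k with
  | zero => simp [BBofC]
  | succ k ih => simp [BBofC, ih, Nat.le_succ_iff, or_imp, forall_and]

lemma iUnion_GGofC_eq_univ (h : ∀ i, ∃ k, i ∉ BBofC C k) : ⋃ k, GGofC C k = Set.univ := by
  refine Set.eq_univ_of_forall fun i => ?_
  obtain ⟨k, hk⟩ := h i
  simp only [mem_BBofC_iff, not_forall, not_not] at hk
  obtain ⟨j, -, hj⟩ := hk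
  exact Set.mem_iUnion.2 ⟨j, hj⟩

variable (hC : ∀ k, GGofC C (k + 1) ⊆ BBofC C k)
include hC

lemma pairwise_disjoint_GGofC : Pairwise fun j k => Disjoint (GGofC C j) (GGofC C k) := by
  have hlt : ∀ {j k}, j < k → Disjoint (GGofC C j) (GGofC C k) := by
    intro j k hjk
    obtain ⟨m, rfl⟩ : ∃ m, k = m + 1 := ⟨k - 1, by omega⟩
    exact Set.disjoint_right.2 fun i hi => mem_BBofC_iff.1 (hC m hi) j (by omega)
  intro j k hjk
  rcases lt_or_gt_of_ne hjk with h | h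
  exacts [hlt h, (hlt h).symm]

lemma grade_eq_of_mem_of_mem {k k' : ℕ} {g : Set Site} (hg : g.Nonempty) (h : g ∈ C k)
    (h' : g ∈ C k') : k = k' := by
  by_contra hne
  obtain ⟨x, hx⟩ := hg
  exact Set.disjoint_left.1 (pairwise_disjoint_GGofC hC hne) (mem_GGofC h hx) (mem_GGofC h' hx)

lemma disjoint_of_mem_of_grade_ne {k k' : ℕ} {g g' : Set Site} (h : g ∈ C k) (h' : g' ∈ C k')
    (hkk' : k ≠ k') : Disjoint g g' :=
  (pairwise_disjoint_GGofC hC hkk').mono (fun _ => mem_GGofC h) (fun _ => mem_GGofC h')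

end GradedFamily

section Catoms

variable {Γ γ : ℕ → ℝ} {ω : Omega}

lemma GGofC_Catoms_zero : GGofC (Catoms Γ γ ω) 0 = {i | ω i = false} := by
  ext i
  simp only [GGofC, Catoms, Set.mem_iUnion, Set.mem_ofPred_eq, exists_prop]
  constructor
  · rintro ⟨_, ⟨j, hj, rfl⟩, rfl⟩
    exact hj
  · exact fun hi => ⟨{i}, ⟨i, hi, rfl⟩, rfl⟩

lemma GGofC_Catoms_succ (k : ℕ) :
    GGofC (Catoms Γ γ ω) (k + 1) = gentleStep Γ γ (k + 1) (BB Γ γ ω k) := by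
  ext j
  simp [GGofC, Catoms, gentleStep]

lemma BBofC_Catoms (k : ℕ) : BBofC (Catoms Γ γ ω) k = BB Γ γ ω k := by
  induction k with
  | zero => ext i; simp [BBofC, GGofC_Catoms_zero, BB]
  | succ k ih => rw [BBofC, ih, GGofC_Catoms_succ, BB]

lemma GGofC_Catoms_succ_subset (k : ℕ) :
    GGofC (Catoms Γ γ ω) (k + 1) ⊆ BBofC (Catoms Γ γ ω) k := by
  rw [GGofC_Catoms_succ, BBofC_Catoms]
  rintro x ⟨g, hg, hx⟩
  exact hg.subset hx

lemma finite_of_mem_Catoms {k : ℕ} {g : Set Site} (hg : g ∈ Catoms Γ γ ω k) : g.Finite := by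
  cases k with
  | zero => obtain ⟨i, -, rfl⟩ := hg; exact Set.finite_singleton i
  | succ k => exact kAtom.finite hg

lemma nonempty_of_mem_Catoms (hΓ : ∀ k, 0 ≤ Γ (k + 1)) {k : ℕ} {g : Set Site}
    (hg : g ∈ Catoms Γ γ ω k) : g.Nonempty := by
  cases k with
  | zero => obtain ⟨i, -, rfl⟩ := hg; exact Set.singleton_nonempty i
  | succ k => exact kAtom.nonempty (hΓ k) hg

lemma disjoint_of_mem_Catoms (hΓγ : ∀ k, Γ (k + 1) < γ (k + 1)) {k : ℕ} {g g' : Set Site}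
    (hg : g ∈ Catoms Γ γ ω k) (hg' : g' ∈ Catoms Γ γ ω k) (hne : g ≠ g') : Disjoint g g' := by
  cases k with
  | zero =>
    obtain ⟨i, -, rfl⟩ := hg
    obtain ⟨i', -, rfl⟩ := hg'
    exact Set.disjoint_singleton.2 fun h => hne (h ▸ rfl)
  | succ k => exact kAtom.disjoint (hΓγ k) hg hg' hne

end Catoms

def allBad (S : Finset Site) : Set Omega := ⋂ j ∈ S, {ω | ω j = true}

lemma mem_allBad {S : Finset Site} {ω : Omega} : ω ∈ allBad S ↔ ∀ j ∈ S, ω j = true := by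
  simp [allBad]

section WitnessTrees

variable {Γ γ : ℕ → ℝ}

noncomputable def annulus (Γ γ : ℕ → ℝ) (k : ℕ) (i : Site) : Finset Site :=
  (chebBall i ⌊Γ k + γ k⌋₊).filter fun j => Γ k / 2 < dist1 i j ∧ (dist1 i j : ℝ) ≤ Γ k + γ k

lemma mem_annulus {k : ℕ} {i j : Site} :
    j ∈ annulus Γ γ k i ↔ Γ k / 2 < dist1 i j ∧ (dist1 i j : ℝ) ≤ Γ k + γ k := by
  simp only [annulus, Finset.mem_filter, and_iff_right_iff_imp]
  exact fun h => mem_chebBall_floor_of_dist1_le h.2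

lemma card_annulus_le {k : ℕ} (h : 0 ≤ Γ k + γ k) (i : Site) :
    ((annulus Γ γ k i).card : ℝ) ≤ (2 * (Γ k + γ k) + 1) ^ 2 :=
  (Nat.cast_le.2 (Finset.card_filter_le _ _)).trans (card_chebBall_floor_le i h)

/-- Vertex sets of binary trees of depth `k` rooted at `i`: a tree of depth `k + 1` joins a tree
rooted at `i` and one rooted in the `(k + 1)`-th annulus around `i`. -/
noncomputable def witnessTrees (Γ γ : ℕ → ℝ) : ℕ → Site → Finset (Finset Site)
  | 0, i => {{i}}
  | k + 1, i => (annulus Γ γ (k + 1) i).biUnion fun j =>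
      (witnessTrees Γ γ k i ×ˢ witnessTrees Γ γ k j).image fun p => p.1 ∪ p.2

lemma mem_witnessTrees_succ {k : ℕ} {i : Site} {S : Finset Site} :
    S ∈ witnessTrees Γ γ (k + 1) i ↔ ∃ j ∈ annulus Γ γ (k + 1) i,
      ∃ s ∈ witnessTrees Γ γ k i, ∃ t ∈ witnessTrees Γ γ k j, s ∪ t = S := by
  simp [witnessTrees, and_assoc]

/-- `aZero Γ γ = ∑' j, logWeight Γ γ j`. -/
noncomputable def logWeight (Γ γ : ℕ → ℝ) (j : ℕ) : ℝ :=
  (2 : ℝ) ^ (-(j : ℤ)) * Real.log ((2 * (Γ (j + 1) + γ (j + 1)) + 1) ^ 2)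

variable (hΓpos : ∀ k, 1 ≤ k → 0 < Γ k) (hγpos : ∀ k, 1 ≤ k → 0 < γ k)
include hΓpos hγpos

/-- The far `(k-1)`-bad companion of a `k`-bad site roots the second subtree. -/
lemma setOf_mem_BB_subset (k : ℕ) (i : Site) :
    {ω : Omega | i ∈ BB Γ γ ω k} ⊆ ⋃ S ∈ witnessTrees Γ γ k i, allBad S := by
  induction k generalizing i with
  | zero =>
    intro ω hω
    exact Set.mem_biUnion (Finset.mem_singleton_self _) (by simpa [mem_allBad, BB] using hω)
  | succ k ih =>
    rintro ω ⟨hik, hing⟩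
    obtain ⟨j, hjB, hj⟩ := exists_mem_far_of_notMem_gentleStep (hΓpos (k + 1) (by omega)).le
      (hγpos (k + 1) (by omega)).le hik hing
    obtain ⟨s, hs, hωs⟩ := Set.mem_iUnion₂.1 (ih i hik)
    obtain ⟨t, ht, hωt⟩ := Set.mem_iUnion₂.1 (ih j hjB)
    refine Set.mem_biUnion (mem_witnessTrees_succ.2 ⟨j, mem_annulus.2 hj, s, hs, t, ht, rfl⟩) ?_
    simp only [mem_allBad, Finset.mem_union] at hωs hωt ⊢
    exact fun x hx => hx.elim (hωs x) (hωt x)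

lemma dist1_le_thetaSeq_of_mem_witnessTrees {k : ℕ} {i x : Site} {S : Finset Site}
    (hS : S ∈ witnessTrees Γ γ k i) (hx : x ∈ S) : (dist1 i x : ℝ) ≤ thetaSeq Γ γ k := by
  induction k generalizing i S with
  | zero =>
    simp only [witnessTrees, Finset.mem_singleton] at hS
    subst hS
    rw [Finset.mem_singleton.1 hx, dist1_self]
    simp [thetaSeq]
  | succ k ih =>
    obtain ⟨j, hj, s, hs, t, ht, rfl⟩ := mem_witnessTrees_succ.1 hS
    have hstep : 0 < Γ (k + 1) + γ (k + 1) := add_pos (hΓpos _ (by omega)) (hγpos _ (by omega))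
    rw [thetaSeq_succ]
    rcases Finset.mem_union.1 hx with hx | hx
    · linarith [ih hs hx]
    · linarith [ih ht hx, (mem_annulus.1 hj).2, dist1_triangle i j x]

/-- The two subtrees are disjoint because their roots are more than `Γ_{k+1}/2 ≥ 2θ_k` apart. -/
lemma card_eq_of_mem_witnessTrees (hsep : ∀ k, 4 * thetaSeq Γ γ k ≤ Γ (k + 1)) {k : ℕ}
    {i : Site} {S : Finset Site} (hS : S ∈ witnessTrees Γ γ k i) : S.card = 2 ^ k := by
  induction k generalizing i S with
  | zero =>
    simp only [witnessTrees, Finset.mem_singleton] at hS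
    simp [hS]
  | succ k ih =>
    obtain ⟨j, hj, s, hs, t, ht, rfl⟩ := mem_witnessTrees_succ.1 hS
    have hdisj : Disjoint s t := by
      refine Finset.disjoint_left.2 fun x hxs hxt => ?_
      have hxj := dist1_le_thetaSeq_of_mem_witnessTrees hΓpos hγpos ht hxt
      rw [dist1_comm] at hxj
      linarith [dist1_le_thetaSeq_of_mem_witnessTrees hΓpos hγpos hs hxs, hsep k,
        (mem_annulus.1 hj).1, dist1_triangle i x j]
    rw [Finset.card_union_of_disjoint hdisj, ih hs, ih ht, pow_succ]
    ring

lemma card_witnessTrees_le (k : ℕ) (i : Site) :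
    ((witnessTrees Γ γ k i).card : ℝ) ≤
      Real.exp (2 ^ k * (∑ j ∈ Finset.range k, logWeight Γ γ j) / 2) := by
  induction k generalizing i with
  | zero => simp [witnessTrees]
  | succ k ih =>
    set E := Real.exp (2 ^ k * (∑ j ∈ Finset.range k, logWeight Γ γ j) / 2)
    set M : ℝ := (2 * (Γ (k + 1) + γ (k + 1)) + 1) ^ 2
    have hstep : 0 < Γ (k + 1) + γ (k + 1) := add_pos (hΓpos _ (by omega)) (hγpos _ (by omega))
    have hM : 0 < M := by positivity
    have hcard : (witnessTrees Γ γ (k + 1) i).card ≤ ∑ j ∈ annulus Γ γ (k + 1) i,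
        (witnessTrees Γ γ k i).card * (witnessTrees Γ γ k j).card :=
      Finset.card_biUnion_le.trans (Finset.sum_le_sum fun j _ =>
        Finset.card_image_le.trans_eq (Finset.card_product _ _))
    calc ((witnessTrees Γ γ (k + 1) i).card : ℝ)
        ≤ ∑ j ∈ annulus Γ γ (k + 1) i,
            ((witnessTrees Γ γ k i).card : ℝ) * (witnessTrees Γ γ k j).card := by
          exact_mod_cast hcard
      _ ≤ ∑ _j ∈ annulus Γ γ (k + 1) i, E * E :=
          Finset.sum_le_sum fun j _ => mul_le_mul (ih i) (ih j) (by positivity) (by positivity)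
      _ = (annulus Γ γ (k + 1) i).card * (E * E) := by rw [Finset.sum_const, nsmul_eq_mul]
      _ ≤ M * (E * E) := by gcongr; exact card_annulus_le hstep.le i
      _ = Real.exp (2 ^ (k + 1) * (∑ j ∈ Finset.range (k + 1), logWeight Γ γ j) / 2) := by
          rw [← Real.exp_log hM, ← Real.exp_add, ← Real.exp_add, Finset.sum_range_succ,
            logWeight, zpow_neg, zpow_natCast]
          congr 1
          field_simp
          ring

lemma logWeight_nonneg (j : ℕ) : 0 ≤ logWeight Γ γ j := by
  have := add_pos (hΓpos (j + 1) (by omega)) (hγpos (j + 1) (by omega))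
  exact mul_nonneg (by positivity) (Real.log_nonneg (one_le_pow₀ (by linarith)))

lemma card_witnessTrees_le_exp_aZero (ha0 : Summable (logWeight Γ γ)) (k : ℕ) (i : Site) :
    ((witnessTrees Γ γ k i).card : ℝ) ≤ Real.exp (2 ^ k * aZero Γ γ / 2) := by
  refine (card_witnessTrees_le hΓpos hγpos k i).trans (Real.exp_le_exp.2 ?_)
  gcongr
  exact ha0.sum_le_tsum _ fun j _ => logWeight_nonneg hΓpos hγpos j

end WitnessTrees

section Probability

variable (Q : Measure Omega)

lemma measurableSet_apply_eq_true (j : Site) : MeasurableSet {ω : Omega | ω j = true} :=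
  measurableSet_eq_fun (measurable_pi_apply j) measurable_const

lemma extSigma_le : extSigma ≤ (inferInstance : MeasurableSpace Omega) :=
  measurable_iff_comap_le.1 (measurable_pi_lambda _ fun j => measurable_pi_apply (j : Site))

lemma measurableSet_extSigma_allBad {S : Finset Site} (h0 : (0 : Site) ∉ S) :
    MeasurableSet[extSigma] (allBad S) := by
  refine S.measurableSet_biInter fun j hj => ?_
  have hrestrict : Measurable[extSigma] fun (ω : Omega) (j : {j : Site // j ≠ 0}) => ω j :=
    Measurable.of_comap_le le_rfl
  have hcoord : Measurable[extSigma] fun ω : Omega => ω j :=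
    (measurable_pi_apply (⟨j, ne_of_mem_of_not_mem hj h0⟩ : {j : Site // j ≠ 0})).comp hrestrict
  exact measurableSet_eq_fun hcoord measurable_const

lemma measurePreserving_shift (hinv : TransInvariant Q) (v : Site) :
    MeasurePreserving (fun (ω : Omega) (x : Site) => ω (x + v)) Q Q :=
  ⟨measurable_pi_lambda _ fun x => measurable_pi_apply (x + v), hinv v⟩

lemma condBadProb_le_badParam : condBadProb Q ≤ᵐ[Q] fun _ => badParam Q := by
  have hbdd : ∀ᵐ ω ∂Q, |condBadProb Q ω| ≤ 1 :=
    ae_bdd_abs_condExp_of_ae_bdd_abs (Filter.Eventually.of_forall fun ω => by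
      by_cases h : ω 0 = true <;> simp [Set.indicator, h])
  exact ae_le_essSup ⟨1, Filter.eventually_map.2 (hbdd.mono fun ω h => (le_abs_self _).trans h)⟩

variable [IsProbabilityMeasure Q]

lemma measureReal_inter_apply_zero_le {B : Set Omega} (hB : MeasurableSet[extSigma] B) :
    Q.real (B ∩ {ω | ω 0 = true}) ≤ badParam Q * Q.real B := by
  have hint : Integrable ({ω : Omega | ω 0 = true}.indicator fun _ => (1 : ℝ)) Q :=
    (integrable_const 1).indicator (measurableSet_apply_eq_true 0)
  calc Q.real (B ∩ {ω | ω 0 = true})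
      = ∫ ω in B, {ω : Omega | ω 0 = true}.indicator (fun _ => (1 : ℝ)) ω ∂Q := by
        rw [setIntegral_indicator (measurableSet_apply_eq_true 0), setIntegral_const,
          smul_eq_mul, mul_one]
    _ = ∫ ω in B, condBadProb Q ω ∂Q := (setIntegral_condExp extSigma_le hint hB).symm
    _ ≤ ∫ _ in B, badParam Q ∂Q :=
        integral_mono_ae integrable_condExp.integrableOn (integrable_const _).integrableOn
          (ae_restrict_of_ae (condBadProb_le_badParam Q))
    _ = badParam Q * Q.real B := by rw [setIntegral_const, smul_eq_mul, mul_comm]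

lemma badParam_nonneg : 0 ≤ badParam Q := by
  simpa using (measureReal_nonneg).trans (measureReal_inter_apply_zero_le Q MeasurableSet.univ)

/-- Translating by `-i` moves the site `i` to the origin, where conditioning on the other
sites costs a factor `p`. -/
lemma measureReal_allBad_insert_le (hinv : TransInvariant Q) {S : Finset Site} {i : Site}
    (hi : i ∉ S) : Q.real (allBad (insert i S)) ≤ badParam Q * Q.real (allBad S) := by
  set B := allBad (S.image (· - i))
  have hB : MeasurableSet[extSigma] B :=
    measurableSet_extSigma_allBad fun h0 => hi (by simpa [sub_eq_zero] using h0)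
  have hshift := measurePreserving_shift Q hinv i
  have hpre : (fun (ω : Omega) (x : Site) => ω (x + i)) ⁻¹' B = allBad S := by
    ext ω
    simp only [B, Set.mem_preimage, mem_allBad, Finset.forall_mem_image, sub_add_cancel]
  have hpre' : (fun (ω : Omega) (x : Site) => ω (x + i)) ⁻¹' (B ∩ {ω | ω 0 = true}) =
      allBad (insert i S) := by
    rw [Set.preimage_inter, hpre]
    ext ω
    simp only [Set.mem_inter_iff, Set.mem_preimage, Set.mem_ofPred_eq, zero_add, mem_allBad,
      Finset.forall_mem_insert, and_comm]
  rw [← hpre, ← hpre', hshift.measureReal_preimage (extSigma_le _ hB).nullMeasurableSet,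
    hshift.measureReal_preimage
      ((extSigma_le _ hB).inter (measurableSet_apply_eq_true 0)).nullMeasurableSet]
  exact measureReal_inter_apply_zero_le Q hB

lemma measureReal_allBad_le (hinv : TransInvariant Q) (S : Finset Site) :
    Q.real (allBad S) ≤ badParam Q ^ S.card := by
  induction S using Finset.induction_on with
  | empty => simp [allBad]
  | insert i S hi ih =>
    rw [Finset.card_insert_of_notMem hi, pow_succ']
    exact (measureReal_allBad_insert_le Q hinv hi).trans
      (mul_le_mul_of_nonneg_left ih (badParam_nonneg Q))

end Probability

/-- The box around `i` is where a `(k+1)`-gentle atom `g` with `i ∈ Y₀(g)` has to lie. -/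
def badNear (Γ γ : ℕ → ℝ) (k : ℕ) (i : Site) : Set Omega :=
  {ω | ∃ j ∈ chebBall i ⌊thetaSeq Γ γ (k + 1) + Γ (k + 1)⌋₊, j ∈ BB Γ γ ω k}

section BorelCantelli

variable {Γ γ : ℕ → ℝ} (hΓpos : ∀ k, 1 ≤ k → 0 < Γ k) (hγpos : ∀ k, 1 ≤ k → 0 < γ k)
  (hsep : ∀ k, 4 * thetaSeq Γ γ k ≤ Γ (k + 1)) (ha0 : Summable (logWeight Γ γ))
  (Q : Measure Omega) [IsProbabilityMeasure Q] (hinv : TransInvariant Q)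
include hΓpos hγpos hsep ha0 hinv

lemma measureReal_mem_BB_le (k : ℕ) (i : Site) :
    Q.real {ω | i ∈ BB Γ γ ω k} ≤ (badParam Q * Real.exp (aZero Γ γ / 2)) ^ 2 ^ k := by
  calc Q.real {ω | i ∈ BB Γ γ ω k}
      ≤ Q.real (⋃ S ∈ witnessTrees Γ γ k i, allBad S) :=
        measureReal_mono (setOf_mem_BB_subset hΓpos hγpos k i) (measure_ne_top Q _)
    _ ≤ ∑ S ∈ witnessTrees Γ γ k i, Q.real (allBad S) := measureReal_biUnion_finset_le _ _
    _ ≤ ∑ _S ∈ witnessTrees Γ γ k i, badParam Q ^ 2 ^ k :=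
        Finset.sum_le_sum fun S hS => (measureReal_allBad_le Q hinv S).trans_eq
          (by rw [card_eq_of_mem_witnessTrees hΓpos hγpos hsep hS])
    _ = (witnessTrees Γ γ k i).card * badParam Q ^ 2 ^ k := by
        rw [Finset.sum_const, nsmul_eq_mul]
    _ ≤ Real.exp (2 ^ k * aZero Γ γ / 2) * badParam Q ^ 2 ^ k :=
        mul_le_mul_of_nonneg_right (card_witnessTrees_le_exp_aZero hΓpos hγpos ha0 k i)
          (pow_nonneg (badParam_nonneg Q) _)
    _ = (badParam Q * Real.exp (aZero Γ γ / 2)) ^ 2 ^ k := by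
        rw [mul_pow, ← Real.exp_nat_mul, mul_comm]
        push_cast
        ring_nf

lemma measureReal_badNear_le (k : ℕ) (i : Site) :
    Q.real (badNear Γ γ k i) ≤ (2 * (thetaSeq Γ γ (k + 1) + Γ (k + 1)) + 1) ^ 2 *
      (badParam Q * Real.exp (aZero Γ γ / 2)) ^ 2 ^ k := by
  set n := ⌊thetaSeq Γ γ (k + 1) + Γ (k + 1)⌋₊
  have hR : 0 ≤ thetaSeq Γ γ (k + 1) + Γ (k + 1) :=
    add_nonneg (thetaSeq_nonneg hΓpos hγpos _) (hΓpos _ (by omega)).le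
  calc Q.real (badNear Γ γ k i)
      ≤ Q.real (⋃ j ∈ chebBall i n, {ω | j ∈ BB Γ γ ω k}) :=
        measureReal_mono (fun ω ⟨j, hj, hjB⟩ => Set.mem_biUnion hj hjB) (measure_ne_top Q _)
    _ ≤ ∑ j ∈ chebBall i n, Q.real {ω | j ∈ BB Γ γ ω k} := measureReal_biUnion_finset_le _ _
    _ ≤ ∑ _j ∈ chebBall i n, (badParam Q * Real.exp (aZero Γ γ / 2)) ^ 2 ^ k :=
        Finset.sum_le_sum fun j _ => measureReal_mem_BB_le hΓpos hγpos hsep ha0 Q hinv k j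
    _ = (chebBall i n).card * (badParam Q * Real.exp (aZero Γ γ / 2)) ^ 2 ^ k := by
        rw [Finset.sum_const, nsmul_eq_mul]
    _ ≤ _ := by
        gcongr
        · exact pow_nonneg (mul_nonneg (badParam_nonneg Q) (Real.exp_pos _).le) _
        · exact card_chebBall_floor_le i hR

end BorelCantelli

lemma ae_eventually_notMem_badNear {Γ γ : ℕ → ℝ} (hΓpos : ∀ k, 1 ≤ k → 0 < Γ k)
    (hγpos : ∀ k, 1 ≤ k → 0 < γ k) (hsep : ∀ k, 4 * thetaSeq Γ γ k ≤ Γ (k + 1))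
    (ha0 : Summable (logWeight Γ γ))
    (hicf : ∀ a : ℝ, 0 < a → Summable fun k : ℕ =>
      (2 * (thetaSeq Γ γ (k + 1) + Γ (k + 1)) + 1) ^ 2 * Real.exp (-a * 2 ^ k))
    (Q : Measure Omega) [IsProbabilityMeasure Q] (hinv : TransInvariant Q)
    (hp : badParam Q < Real.exp (-(aZero Γ γ) / 2)) :
    ∀ᵐ ω ∂Q, ∀ i, ∀ᶠ k in Filter.atTop, ω ∉ badNear Γ γ k i := by
  have hr1 : badParam Q * Real.exp (aZero Γ γ / 2) < 1 := by
    calc badParam Q * Real.exp (aZero Γ γ / 2)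
        < Real.exp (-(aZero Γ γ) / 2) * Real.exp (aZero Γ γ / 2) := by gcongr
      _ = 1 := by rw [← Real.exp_add, neg_div, neg_add_cancel, Real.exp_zero]
  obtain ⟨a, ha, hdecay⟩ :=
    exists_pos_pow_le_exp (mul_nonneg (badParam_nonneg Q) (Real.exp_pos _).le) hr1
  refine ae_all_iff.2 fun i => ae_eventually_notMem_of_measureReal_le (hicf a ha) fun k => ?_
  refine (measureReal_badNear_le hΓpos hγpos hsep ha0 Q hinv k i).trans ?_
  gcongr
  exact_mod_cast hdecay (2 ^ k)

section Assembly

variable {Γ γ : ℕ → ℝ} {ω : Omega}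

lemma mem_badNear_of_mem_Yzero {k : ℕ} (hΓ : 0 ≤ Γ (k + 1)) {g : Set Site} {i : Site}
    (hg : g ∈ Catoms Γ γ ω (k + 1)) (hi : i ∈ Yzero Γ γ (k + 1) g) : ω ∈ badNear Γ γ k i := by
  obtain ⟨i', hi'env, hi'⟩ := hi
  obtain ⟨a, ha⟩ := kAtom.nonempty hΓ hg
  refine ⟨a, mem_chebBall.2 (Nat.le_floor ?_), hg.subset ha⟩
  have hii' : (cheb i i' : ℝ) ≤ thetaSeq Γ γ (k + 1) := by
    rwa [cheb_comm, cheb, Nat.cast_max]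
  have hi'a := cheb_le_of_mem_env hg.2.1 hi'env ha
  have htri : (cheb i a : ℝ) ≤ cheb i i' + cheb i' a := by exact_mod_cast cheb_triangle i i' a
  linarith

lemma isGentleDisintegration_Catoms (hΓ : ∀ k, 0 ≤ Γ (k + 1))
    (hΓγ : ∀ k, Γ (k + 1) < γ (k + 1))
    (hω : ∀ i, ∀ᶠ k in Filter.atTop, ω ∉ badNear Γ γ k i) :
    IsGentleDisintegration Γ γ {i : Site | ω i = false} (Catoms Γ γ ω) := by
  have hC := GGofC_Catoms_succ_subset (Γ := Γ) (γ := γ) (ω := ω)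
  refine ⟨fun k g => finite_of_mem_Catoms, fun k g => nonempty_of_mem_Catoms hΓ,
    fun k k' g hg => grade_eq_of_mem_of_mem hC (nonempty_of_mem_Catoms hΓ hg) hg, ?_, ?_, rfl,
    fun k g hg => hg.2.1, fun k g hg x hx y hy => hg.2.2 x hx y (BBofC_Catoms k ▸ hy), ?_⟩
  · intro k k' g g' hg hg' hne
    rcases eq_or_ne k k' with rfl | hkk'
    exacts [disjoint_of_mem_Catoms hΓγ hg hg' hne, disjoint_of_mem_of_grade_ne hC hg hg' hkk']
  · refine iUnion_GGofC_eq_univ fun i => ?_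
    obtain ⟨k, hk⟩ := (hω i).exists
    refine ⟨k, fun hi => hk ⟨i, mem_chebBall.2 (by simp [cheb_self]), ?_⟩⟩
    rwa [BBofC_Catoms] at hi
  · intro i
    obtain ⟨K, hK⟩ := Filter.eventually_atTop.1 (hω i)
    refine ⟨K, fun k g hg hY => ?_⟩
    by_contra hlt
    exact hK k (by omega) (mem_badNear_of_mem_Yzero (hΓ k) hg hY)

end Assembly

theorem as_gentle_disintegration_general (Γ γ : ℕ → ℝ)
    (hΓpos : ∀ k, 1 ≤ k → 0 < Γ k) (hγpos : ∀ k, 1 ≤ k → 0 < γ k)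
    (hΓγ : ∀ k, 1 ≤ k → Γ k < γ k / 2)
    (hsteep : ∀ k, 1 ≤ k → 5 ≤ Γ (k + 1) / thetaSeq Γ γ k)
    (ha0 : Summable fun k : ℕ =>
      (2 : ℝ) ^ (-(k : ℤ)) * Real.log ((2 * (Γ (k + 1) + γ (k + 1)) + 1) ^ 2))
    (hicf : ∀ a : ℝ, 0 < a → Summable fun k : ℕ =>
      (2 * (thetaSeq Γ γ (k + 1) + Γ (k + 1)) + 1) ^ 2 * Real.exp (-a * 2 ^ k))
    (Q : Measure Omega) [IsProbabilityMeasure Q] (hinv : TransInvariant Q)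
    (hp : badParam Q < Real.exp (-(aZero Γ γ) / 2)) :
    ∃ Obar : Set Omega, MeasurableSet Obar ∧ Q Obar = 1 ∧
      ∀ ω ∈ Obar, IsGentleDisintegration Γ γ {i : Site | ω i = false} (Catoms Γ γ ω) := by
  have hae := ae_eventually_notMem_badNear hΓpos hγpos
    (four_mul_thetaSeq_le hΓpos hγpos hsteep) ha0 hicf Q hinv hp
  obtain ⟨Obar, hmeas, hprob, hgood⟩ := exists_measurableSet_measure_eq_one hae
  have hΓγ' : ∀ k, Γ (k + 1) < γ (k + 1) := fun k => by
    linarith [hΓγ (k + 1) (by omega), hΓpos (k + 1) (by omega)]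
  exact ⟨Obar, hmeas, hprob, fun ω hω =>
    isGentleDisintegration_Catoms (fun k => (hΓpos (k + 1) (by omega)).le) hΓγ' (hgood ω hω)⟩

/-- Borel–Cantelli consequence: almost-sure gentle disintegration.  Under
the steepness/summability conditions on `Γ, γ`, if `Q` is a translation-invariant
probability measure on `Ω` with badness parameter `p < e^{-a₀/2}`, then there is a
measurable `Ω̄ ⊆ Ω` with `Q(Ω̄) = 1` such that for every `ω ∈ Ω̄` the collection of the
singletons of `0`-gentle sites together with the `k`-gentle atoms, `k ≥ 1`, is a gentle
disintegration of `L^(l)` with respect to `{i : ω_i = 0}`, `Γ`, `γ`. -/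
theorem as_gentle_disintegration (Γ γ : ℕ → ℝ)
    (hΓpos : ∀ k, 1 ≤ k → 0 < Γ k) (hγpos : ∀ k, 1 ≤ k → 0 < γ k)
    (hΓmono : ∀ k, 1 ≤ k → Γ k < Γ (k + 1)) (hγmono : ∀ k, 1 ≤ k → γ k < γ (k + 1))
    (hΓ1 : 2 ≤ Γ 1) (hΓγ : ∀ k, 1 ≤ k → Γ k < γ k / 2)
    (hsteep : ∀ k, 1 ≤ k → 5 ≤ Γ (k + 1) / thetaSeq Γ γ k)
    (ha0 : Summable fun k : ℕ =>
      (2 : ℝ) ^ (-(k : ℤ)) * Real.log ((2 * (Γ (k + 1) + γ (k + 1)) + 1) ^ 2))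
    (hicf : ∀ a : ℝ, 0 < a → Summable fun k : ℕ =>
      (2 * (thetaSeq Γ γ (k + 1) + Γ (k + 1)) + 1) ^ 2 * Real.exp (-a * 2 ^ k))
    (Q : Measure Omega) [IsProbabilityMeasure Q] (hinv : TransInvariant Q)
    (hp : badParam Q < Real.exp (-(aZero Γ γ) / 2)) :
    ∃ Obar : Set Omega, MeasurableSet Obar ∧ Q Obar = 1 ∧
      ∀ ω ∈ Obar, IsGentleDisintegration Γ γ {i : Site | ω i = false} (Catoms Γ γ ω) :=
  as_gentle_disintegration_general Γ γ hΓpos hγpos hΓγ hsteep ha0 hicf Q hinv hp
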